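/- arXiv:1203.1538 — 2 statements merged into one kernel-verified Lean document; each statement's English description precedes it below -/
import Mathlib

section
/- Under the hypotheses of the convergence theorem (unique ℓ¹ minimizer x*, linear-growth constant t, ZAP recursion x_{n+1} = xₙ − γP sgn(xₙ) with Axₙ = y and ‖xₙ − x*‖₂ ≤ M₀), the one-step deviation satisfies ‖x_{n+1} − x*‖₂² ≤ ‖xₙ − x*‖₂² − 2γt‖xₙ − x*‖₂ + γ²‖P sgn(xₙ)‖₂². -/
open Matrix BigOperators

noncomputable def l1 {N : ℕ} (x : Fin N → ℝ) : ℝ := ∑ i, |x i|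

noncomputable def l2 {N : ℕ} (x : Fin N → ℝ) : ℝ := Real.sqrt (∑ i, (x i) ^ 2)

noncomputable def sgn {N : ℕ} (x : Fin N → ℝ) : Fin N → ℝ := fun i => Real.sign (x i)

noncomputable def Pmat {M N : ℕ} (A : Matrix (Fin M) (Fin N) ℝ) : Matrix (Fin N) (Fin N) ℝ :=
  1 - Aᵀ * (A * Aᵀ)⁻¹ * A

/-! The whole step is the expansion of `‖(xₙ - x*) - γ P sgn xₙ‖²`: since `xₙ - x*` lies in the
kernel of `A` and `P` is the symmetric projection onto that kernel, the cross term equals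
`sgn xₙ ⬝ (xₙ - x*)`, which dominates `‖xₙ‖₁ - ‖x*‖₁` (sign vectors are subgradients of `‖·‖₁`)
and hence `t ‖xₙ - x*‖₂` by the growth condition. -/

lemma abs_sub_abs_le_sign_mul_sub (a b : ℝ) : |a| - |b| ≤ Real.sign a * (a - b) := by
  rcases lt_trichotomy a 0 with ha | rfl | ha
  · rw [Real.sign_of_neg ha, abs_of_neg ha]
    linarith [neg_abs_le b]
  · simp
  · rw [Real.sign_of_pos ha, abs_of_pos ha]
    linarith [le_abs_self b]

lemma l1_sub_l1_le_sgn_dotProduct {N : ℕ} (x z : Fin N → ℝ) :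
    l1 x - l1 z ≤ sgn x ⬝ᵥ (x - z) := by
  rw [l1, l1, ← Finset.sum_sub_distrib]
  exact Finset.sum_le_sum fun i _ => abs_sub_abs_le_sign_mul_sub (x i) (z i)

lemma l2_sq {N : ℕ} (x : Fin N → ℝ) : l2 x ^ 2 = x ⬝ᵥ x := by
  rw [l2, Real.sq_sqrt (Finset.sum_nonneg fun i _ => sq_nonneg _)]
  simp only [dotProduct, sq]

lemma l2_sub_smul_sq {N : ℕ} (v w : Fin N → ℝ) (γ : ℝ) :
    l2 (v - γ • w) ^ 2 = l2 v ^ 2 - 2 * γ * (w ⬝ᵥ v) + γ ^ 2 * l2 w ^ 2 := by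
  simp only [l2_sq, sub_dotProduct, dotProduct_sub, smul_dotProduct, dotProduct_smul,
    dotProduct_comm v w, smul_eq_mul]
  ring

lemma Pmat_transpose {M N : ℕ} (A : Matrix (Fin M) (Fin N) ℝ) : (Pmat A)ᵀ = Pmat A := by
  simp [Pmat, transpose_sub, transpose_mul, transpose_nonsing_inv, Matrix.mul_assoc]

lemma Pmat_mulVec_of_mulVec_eq_zero {M N : ℕ} {A : Matrix (Fin M) (Fin N) ℝ} {v : Fin N → ℝ}
    (hv : A *ᵥ v = 0) : Pmat A *ᵥ v = v := by
  simp [Pmat, sub_mulVec, ← mulVec_mulVec, hv]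

lemma Pmat_mulVec_dotProduct_of_mulVec_eq_zero {M N : ℕ} {A : Matrix (Fin M) (Fin N) ℝ}
    {v : Fin N → ℝ} (hv : A *ᵥ v = 0) (u : Fin N → ℝ) : (Pmat A *ᵥ u) ⬝ᵥ v = u ⬝ᵥ v := by
  rw [dotProduct_comm, dotProduct_mulVec, ← mulVec_transpose, Pmat_transpose,
    Pmat_mulVec_of_mulVec_eq_zero hv, dotProduct_comm]

theorem stmt5_general {M N : ℕ} (A : Matrix (Fin M) (Fin N) ℝ)
    (y : Fin M → ℝ) (xs : Fin N → ℝ) (hxs : A *ᵥ xs = y)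
    (M₀ t : ℝ)
    (hgrow : ∀ x : Fin N → ℝ, A *ᵥ x = y → l2 (x - xs) ≤ M₀ →
      l1 x - l1 xs ≥ t * l2 (x - xs))
    (γ : ℝ) (hγ : 0 < γ)
    (xn xn1 : Fin N → ℝ) (hrec : xn1 = xn - γ • (Pmat A *ᵥ sgn xn))
    (hfeas : A *ᵥ xn = y) (hbound : l2 (xn - xs) ≤ M₀) :
    (l2 (xn1 - xs)) ^ 2 ≤
      (l2 (xn - xs)) ^ 2 - 2 * γ * t * l2 (xn - xs) + γ ^ 2 * (l2 (Pmat A *ᵥ sgn xn)) ^ 2 := by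
  have hker : A *ᵥ (xn - xs) = 0 := by rw [mulVec_sub, hfeas, hxs, sub_self]
  have hdescent : t * l2 (xn - xs) ≤ (Pmat A *ᵥ sgn xn) ⬝ᵥ (xn - xs) := by
    rw [Pmat_mulVec_dotProduct_of_mulVec_eq_zero hker]
    exact (hgrow xn hfeas hbound).le.trans (l1_sub_l1_le_sgn_dotProduct xn xs)
  have hstep : xn1 - xs = (xn - xs) - γ • (Pmat A *ᵥ sgn xn) := by rw [hrec]; abel
  rw [hstep, l2_sub_smul_sq]
  linarith [mul_le_mul_of_nonneg_left hdescent (by positivity : 0 ≤ 2 * γ)]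

theorem stmt5 {M N : ℕ} (A : Matrix (Fin M) (Fin N) ℝ) (hinv : IsUnit (A * Aᵀ))
    (y : Fin M → ℝ) (xs : Fin N → ℝ) (hxs : A *ᵥ xs = y)
    (huniq : ∀ x : Fin N → ℝ, A *ᵥ x = y → x ≠ xs → l1 xs < l1 x)
    (M₀ t : ℝ) (hM₀ : 0 < M₀) (ht : 0 < t)
    (hgrow : ∀ x : Fin N → ℝ, A *ᵥ x = y → l2 (x - xs) ≤ M₀ →
      l1 x - l1 xs ≥ t * l2 (x - xs))
    (γ : ℝ) (hγ : 0 < γ)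
    (xn xn1 : Fin N → ℝ) (hrec : xn1 = xn - γ • (Pmat A *ᵥ sgn xn))
    (hfeas : A *ᵥ xn = y) (hbound : l2 (xn - xs) ≤ M₀) :
    (l2 (xn1 - xs)) ^ 2 ≤
      (l2 (xn - xs)) ^ 2 - 2 * γ * t * l2 (xn - xs) + γ ^ 2 * (l2 (Pmat A *ᵥ sgn xn)) ^ 2 :=
  stmt5_general A y xs hxs M₀ t hgrow γ hγ xn xn1 hrec hfeas hbound
end

section
/- Let x* be the unique minimizer of ‖x‖₁ over the affine space {x : Ax = y}. Define G(u) = u_Iᵀ sgn(x*) + ‖u_{I^c}‖₁ on the compact set {u : ‖u‖₂ = 1, Au = 0}, where I = supp(x*). If this set is nonempty, then G is continuous and attains a positive minimum on it. -/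
open Matrix BigOperators

/-!
On `x* + ker A`, the ℓ¹ norm near `x*` is `‖x* + t u‖₁ = ‖x*‖₁ + t G(u)` for all small `t ≥ 0`:
on `supp x*` the sign of `x*` does not change, and off it `|t u_k| = t |u_k|`. So `G(u) ≤ 0` for a
nonzero `u ∈ ker A` would give a feasible point other than `x*` with no larger ℓ¹ norm. Hence `G > 0`
on the unit sphere of `ker A`, which is compact, so the minimum of the continuous `G` is positive.
-/

open Filter Topology

theorem abs_add_eq_abs_add_mul_sign {a b : ℝ} (ha : a ≠ 0) (hb : |b| ≤ |a|) :
    |a + b| = |a| + b * Real.sign a := by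
  rcases ha.lt_or_gt with ha | ha
  · rw [abs_of_neg ha] at hb ⊢
    rw [Real.sign_of_neg ha, abs_of_nonpos (by linarith [le_abs_self b])]
    ring
  · rw [abs_of_pos ha] at hb ⊢
    rw [Real.sign_of_pos ha, abs_of_nonneg (by linarith [neg_abs_le b])]
    ring

section

variable {N : ℕ}

theorem continuous_l1 : Continuous (l1 : (Fin N → ℝ) → ℝ) :=
  continuous_finsetSum _ fun i _ => by fun_prop

theorem continuous_l2 : Continuous (l2 : (Fin N → ℝ) → ℝ) :=
  Real.continuous_sqrt.comp (continuous_finsetSum _ fun i _ => by fun_prop)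

theorem abs_le_l2 (u : Fin N → ℝ) (i : Fin N) : |u i| ≤ l2 u :=
  Real.abs_le_sqrt (Finset.single_le_sum (fun j _ => sq_nonneg (u j)) (Finset.mem_univ i))

theorem l2_zero : l2 (0 : Fin N → ℝ) = 0 := by
  simp [l2]

theorem isCompact_l2_eq_one : IsCompact {u : Fin N → ℝ | l2 u = 1} := by
  refine Metric.isCompact_of_isClosed_isBounded (isClosed_singleton.preimage continuous_l2)
    ((Metric.isBounded_closedBall (x := 0) (r := 1)).subset ?_)
  intro u hu
  rw [Metric.mem_closedBall, dist_zero_right, pi_norm_le_iff_of_nonneg zero_le_one]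
  exact fun i => (abs_le_l2 u i).trans_eq hu

noncomputable def restrictSupp (x u : Fin N → ℝ) : Fin N → ℝ := fun k => if x k ≠ 0 then u k else 0

noncomputable def l1DirDeriv (x u : Fin N → ℝ) : ℝ :=
  restrictSupp x u ⬝ᵥ sgn x + l1 (u - restrictSupp x u)

theorem continuous_restrictSupp (x : Fin N → ℝ) : Continuous (restrictSupp x) :=
  continuous_pi fun k => by unfold restrictSupp; split_ifs <;> fun_prop

theorem continuous_l1DirDeriv (x : Fin N → ℝ) : Continuous (l1DirDeriv x) :=
  ((continuous_restrictSupp x).dotProduct continuous_const).add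
    (continuous_l1.comp (continuous_id.sub (continuous_restrictSupp x)))

theorem abs_add_mul_apply_eq (x u : Fin N → ℝ) {t : ℝ} (ht : 0 ≤ t) (k : Fin N)
    (hk : x k ≠ 0 → t * |u k| ≤ |x k|) :
    |x k + t * u k| = |x k| + t * (restrictSupp x u k * sgn x k + |u k - restrictSupp x u k|) := by
  by_cases hxk : x k = 0
  · simp [restrictSupp, hxk, abs_mul, abs_of_nonneg ht]
  · rw [abs_add_eq_abs_add_mul_sign hxk (by rw [abs_mul, abs_of_nonneg ht]; exact hk hxk)]
    simp only [restrictSupp, ne_eq, hxk, not_false_eq_true, ↓reduceIte, sgn, sub_self, abs_zero,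
      add_zero]
    ring

theorem l1_add_smul_eq (x u : Fin N → ℝ) {t : ℝ} (ht : 0 ≤ t)
    (h : ∀ k, x k ≠ 0 → t * |u k| ≤ |x k|) :
    l1 (x + t • u) = l1 x + t * l1DirDeriv x u := by
  simp only [l1, l1DirDeriv, dotProduct, Pi.add_apply, Pi.smul_apply, smul_eq_mul, Pi.sub_apply,
    fun k => abs_add_mul_apply_eq x u ht k (h k), Finset.sum_add_distrib]
  rw [← Finset.mul_sum, Finset.sum_add_distrib]

theorem eventually_mul_abs_le (x u : Fin N → ℝ) :
    ∀ᶠ t in 𝓝[>] (0 : ℝ), ∀ k, x k ≠ 0 → t * |u k| ≤ |x k| := by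
  refine eventually_all.2 fun k => ?_
  by_cases hxk : x k = 0
  · exact Eventually.of_forall fun _ h => absurd hxk h
  · have : Tendsto (fun t : ℝ => t * |u k|) (𝓝[>] 0) (𝓝 0) := by
      simpa using ((tendsto_id (x := 𝓝 (0 : ℝ))).mul_const |u k|).mono_left nhdsWithin_le_nhds
    exact (this.eventually_le_const (abs_pos.2 hxk)).mono fun _ h _ => h

theorem l1DirDeriv_pos {M : ℕ} (A : Matrix (Fin M) (Fin N) ℝ) (x : Fin N → ℝ)
    (hmin : ∀ z, A *ᵥ z = A *ᵥ x → z ≠ x → l1 x < l1 z) {u : Fin N → ℝ}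
    (hu : A *ᵥ u = 0) (hu0 : u ≠ 0) : 0 < l1DirDeriv x u := by
  obtain ⟨t, hle, ht⟩ := ((eventually_mul_abs_le x u).and self_mem_nhdsWithin).exists
  have hfeas : A *ᵥ (x + t • u) = A *ᵥ x := by
    rw [mulVec_add, mulVec_smul, hu, smul_zero, add_zero]
  have hne : x + t • u ≠ x := by
    simpa [smul_eq_zero, ne_of_gt ht] using hu0
  have := hmin _ hfeas hne
  rw [l1_add_smul_eq x u ht.le hle] at this
  exact pos_of_mul_pos_right (by linarith) ht.le

end

theorem stmt10 {M N : ℕ} (A : Matrix (Fin M) (Fin N) ℝ) (y : Fin M → ℝ)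
    (xs : Fin N → ℝ) (hxs : A *ᵥ xs = y)
    (huniq : ∀ x : Fin N → ℝ, A *ᵥ x = y → x ≠ xs → l1 xs < l1 x) :
    let G : (Fin N → ℝ) → ℝ := fun u =>
      (fun k => if xs k ≠ 0 then u k else 0) ⬝ᵥ sgn xs +
        l1 (u - fun k => if xs k ≠ 0 then u k else 0)
    let S : Set (Fin N → ℝ) := {u | l2 u = 1 ∧ A *ᵥ u = 0}
    S.Nonempty →
      Continuous G ∧ ∃ m : ℝ, 0 < m ∧ (∀ u ∈ S, m ≤ G u) ∧ ∃ u ∈ S, G u = m := by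
  intro G S hne
  change Continuous (l1DirDeriv xs) ∧ ∃ m : ℝ, 0 < m ∧ (∀ u ∈ S, m ≤ l1DirDeriv xs u) ∧
    ∃ u ∈ S, l1DirDeriv xs u = m
  have hS : IsCompact S := isCompact_l2_eq_one.inter_right (isClosed_singleton.preimage (by fun_prop))
  obtain ⟨u₀, ⟨hu₀, hAu₀⟩, hmin⟩ := hS.exists_isMinOn hne (continuous_l1DirDeriv xs).continuousOn
  have hu₀0 : u₀ ≠ 0 := by
    rintro rfl
    simp [l2_zero] at hu₀
  refine ⟨continuous_l1DirDeriv xs, _, ?_, fun u hu => hmin hu, u₀, ⟨hu₀, hAu₀⟩, rfl⟩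
  exact l1DirDeriv_pos A xs (hxs ▸ huniq) hAu₀ hu₀0
end
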